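/- arXiv:2410.09118 — 6 statements merged into one kernel-verified Lean document; each statement's English description precedes it below -/
import Mathlib

section
/- Let A, B, C be n×n real matrices and let S¹, S² be n×n doubly stochastic matrices. Then ‖A·(S¹·S²) − (S¹·S²)·C‖ ≤ ‖A·S¹ − S¹·B‖ + ‖B·S² − S²·C‖, where ‖·‖ is the ℓ² operator norm on matrices. -/
set_option synthInstance.maxHeartbeats 1000000
set_option maxHeartbeats 1000000

/-- The ℓ² operator norm of a square real matrix: the operator norm of the
induced linear map on Euclidean space. -/
noncomputable def l2OpNorm {n : ℕ} (M : Matrix (Fin n) (Fin n) ℝ) : ℝ :=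
  ‖Matrix.toEuclideanCLM (𝕜 := ℝ) M‖

lemma l2OpNorm_permMatrix {n : ℕ} (σ : Equiv.Perm (Fin n)) :
    l2OpNorm (σ.permMatrix ℝ) ≤ 1 := by
  apply ContinuousLinearMap.opNorm_le_bound _ zero_le_one
  intro x
  rw [one_mul]
  have hx : x = (WithLp.equiv 2 (Fin n → ℝ)).symm (WithLp.equiv 2 (Fin n → ℝ) x) := rfl
  rw [hx, show ∀ v : Fin n → ℝ, Matrix.toEuclideanCLM (𝕜 := ℝ) (σ.permMatrix ℝ) ((WithLp.equiv 2 (Fin n → ℝ)).symm v) = (WithLp.equiv 2 (Fin n → ℝ)).symm (Matrix.toLin' (σ.permMatrix ℝ) v) from fun v => rfl]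
  set y := WithLp.equiv 2 (Fin n → ℝ) x with hy
  have hmv : Matrix.toLin' (σ.permMatrix ℝ) y = fun i => y (σ i) := by
    funext i
    simp [Matrix.toLin'_apply, Matrix.mulVec, dotProduct, Equiv.Perm.permMatrix,
      PEquiv.toMatrix, Equiv.toPEquiv]
  rw [hmv]
  apply le_of_eq
  rw [EuclideanSpace.norm_eq, EuclideanSpace.norm_eq]
  congr 1
  exact Fintype.sum_equiv σ _ _ (fun i => rfl)

lemma l2OpNorm_doublyStochastic {n : ℕ} {S : Matrix (Fin n) (Fin n) ℝ}
    (hS : S ∈ doublyStochastic ℝ (Fin n)) : l2OpNorm S ≤ 1 := by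
  obtain ⟨w, hw0, hw1, hwS⟩ := exists_eq_sum_perm_of_mem_doublyStochastic hS
  calc l2OpNorm S = ‖∑ σ, w σ • Matrix.toEuclideanCLM (𝕜 := ℝ) (σ.permMatrix ℝ)‖ := by
        unfold l2OpNorm
        rw [← hwS]
        congr 1
        simp [map_sum]
    _ ≤ ∑ σ, ‖w σ • Matrix.toEuclideanCLM (𝕜 := ℝ) (σ.permMatrix ℝ)‖ := norm_sum_le _ _
    _ ≤ ∑ σ : Equiv.Perm (Fin n), w σ := by
        apply Finset.sum_le_sum
        intro σ _
        calc ‖w σ • Matrix.toEuclideanCLM (𝕜 := ℝ) (σ.permMatrix ℝ)‖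
            ≤ ‖w σ‖ * ‖Matrix.toEuclideanCLM (𝕜 := ℝ) (σ.permMatrix ℝ)‖ := ContinuousLinearMap.opNorm_smul_le _ _
          _ ≤ ‖w σ‖ * 1 := mul_le_mul_of_nonneg_left (l2OpNorm_permMatrix σ) (norm_nonneg _)
          _ = w σ := by rw [mul_one, Real.norm_eq_abs, abs_of_nonneg (hw0 σ)]
    _ = 1 := hw1

lemma l2OpNorm_mul_le {n : ℕ} (M N : Matrix (Fin n) (Fin n) ℝ) :
    l2OpNorm (M * N) ≤ l2OpNorm M * l2OpNorm N := by
  unfold l2OpNorm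
  rw [map_mul]
  exact ContinuousLinearMap.opNorm_comp_le _ _

/-- For matrices `A B C` and doubly stochastic `S¹ S²`,
`‖A(S¹S²) − (S¹S²)C‖ ≤ ‖AS¹ − S¹B‖ + ‖BS² − S²C‖` in the ℓ² operator norm. -/
theorem l2OpNorm_conjugation_triangle {n : ℕ}
    (A B C S1 S2 : Matrix (Fin n) (Fin n) ℝ)
    (hS1 : S1 ∈ doublyStochastic ℝ (Fin n)) (hS2 : S2 ∈ doublyStochastic ℝ (Fin n)) :
    l2OpNorm (A * (S1 * S2) - (S1 * S2) * C) ≤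
      l2OpNorm (A * S1 - S1 * B) + l2OpNorm (B * S2 - S2 * C) := by
  have key : A * (S1 * S2) - (S1 * S2) * C
      = (A * S1 - S1 * B) * S2 + S1 * (B * S2 - S2 * C) := by
    noncomm_ring
  have h0 : ∀ M : Matrix (Fin n) (Fin n) ℝ, 0 ≤ l2OpNorm M :=
    fun M => norm_nonneg _
  calc l2OpNorm (A * (S1 * S2) - (S1 * S2) * C)
      = ‖Matrix.toEuclideanCLM (𝕜 := ℝ) ((A * S1 - S1 * B) * S2)
          + Matrix.toEuclideanCLM (𝕜 := ℝ) (S1 * (B * S2 - S2 * C))‖ := by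
        unfold l2OpNorm; rw [key, map_add]
    _ ≤ l2OpNorm ((A * S1 - S1 * B) * S2) + l2OpNorm (S1 * (B * S2 - S2 * C)) :=
        norm_add_le _ _
    _ ≤ l2OpNorm (A * S1 - S1 * B) * l2OpNorm S2
        + l2OpNorm S1 * l2OpNorm (B * S2 - S2 * C) :=
        add_le_add (l2OpNorm_mul_le _ _) (l2OpNorm_mul_le _ _)
    _ ≤ l2OpNorm (A * S1 - S1 * B) * 1 + 1 * l2OpNorm (B * S2 - S2 * C) :=
        add_le_add
          (mul_le_mul_of_nonneg_left (l2OpNorm_doublyStochastic hS2) (h0 _))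
          (mul_le_mul_of_nonneg_right (l2OpNorm_doublyStochastic hS1) (h0 _))
    _ = l2OpNorm (A * S1 - S1 * B) + l2OpNorm (B * S2 - S2 * C) := by ring
end

section
/- Let S¹, S² be n×n doubly stochastic matrices and let X, Y, Z : Fin n → E where E is a normed additive commutative group. Then Σ_{i,j} (S¹·S²)_{i,j} · ‖X_i − Z_j‖ ≤ Σ_{i,k} S¹_{i,k} · ‖X_i − Y_k‖ + Σ_{k,j} S²_{k,j} · ‖Y_k − Z_j‖. -/
/-! Expand `(S¹S²)ᵢⱼ = ∑ₖ S¹ᵢₖ S²ₖⱼ` and bound each `‖Xᵢ - Zⱼ‖` by the detour through `Yₖ`, with the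
nonnegative weight `S¹ᵢₖ S²ₖⱼ`. The first detour leg no longer depends on `j`, and summing out `j`
uses that the rows of `S²` sum to one; symmetrically, summing out `i` in the second leg uses that the
columns of `S¹` sum to one. -/

open Finset Matrix

section

variable {R : Type*} [CommSemiring R] [PartialOrder R] [IsOrderedRing R]
  {l m o : Type*} [Fintype l] [Fintype m] [Fintype o]

theorem sum_sum_mul_apply_mul_le {A : Matrix l m R} {B : Matrix m o R}
    (hA : ∀ i k, 0 ≤ A i k) (hB : ∀ k j, 0 ≤ B k j)
    {c : l → o → R} {c₁ : l → m → R} {c₂ : m → o → R}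
    (hc : ∀ i k j, c i j ≤ c₁ i k + c₂ k j) :
    ∑ i, ∑ j, (A * B) i j * c i j ≤
      ∑ i, ∑ k, A i k * c₁ i k * ∑ j, B k j + ∑ k, ∑ j, (∑ i, A i k) * B k j * c₂ k j :=
  calc ∑ i, ∑ j, (A * B) i j * c i j = ∑ i, ∑ j, ∑ k, A i k * B k j * c i j := by
        simp_rw [mul_apply, sum_mul]
    _ ≤ ∑ i, ∑ j, ∑ k, A i k * B k j * (c₁ i k + c₂ k j) := by
        gcongr with i _ j _ k _
        · exact mul_nonneg (hA i k) (hB k j)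
        · exact hc i k j
    _ = _ := by
        simp_rw [mul_add, sum_add_distrib, mul_sum, sum_mul]
        congr 1
        · exact sum_congr rfl fun i _ => by rw [sum_comm]; simp_rw [mul_right_comm]
        · rw [sum_comm]
          exact (sum_congr rfl fun j _ => sum_comm).trans sum_comm

end

/-- For doubly stochastic `S¹ S²` and node features `X Y Z`,
`Σ_{i,j} (S¹S²)_{ij} ‖X i − Z j‖ ≤ Σ_{i,k} S¹_{ik} ‖X i − Y k‖ + Σ_{k,j} S²_{kj} ‖Y k − Z j‖`. -/
theorem feature_cost_triangle {n : ℕ} {E : Type*} [NormedAddCommGroup E]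
    (S1 S2 : Matrix (Fin n) (Fin n) ℝ)
    (hS1 : S1 ∈ doublyStochastic ℝ (Fin n)) (hS2 : S2 ∈ doublyStochastic ℝ (Fin n))
    (X Y Z : Fin n → E) :
    ∑ i, ∑ j, (S1 * S2) i j * ‖X i - Z j‖ ≤
      (∑ i, ∑ k, S1 i k * ‖X i - Y k‖) + ∑ k, ∑ j, S2 k j * ‖Y k - Z j‖ := by
  rw [mem_doublyStochastic_iff_sum] at hS1 hS2
  simpa [hS1.2.2, hS2.2.1] using sum_sum_mul_apply_mul_le hS1.1 hS2.1 fun i k j =>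
    norm_sub_le_norm_sub_add_norm_sub (X i) (Y k) (Z j)
end

section
/- The graph pseudo-metric d satisfies the triangle inequality: for any three featured graphs (A,X), (B,Y), (C,Z) on n vertices with features in ℝ^d, d((A,X),(C,Z)) ≤ d((A,X),(B,Y)) + d((B,Y),(C,Z)). -/
/-- A featured graph on `n` vertices: an adjacency matrix of a simple graph
(symmetric, 0/1 entries, zero diagonal) together with node features in `ℝ^d`. -/
structure FeaturedGraph (n d : ℕ) where
  A : Matrix (Fin n) (Fin n) ℝ
  X : Fin n → EuclideanSpace ℝ (Fin d)
  isSymm : A.IsSymm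
  zeroOne : ∀ i j, A i j = 0 ∨ A i j = 1
  loopless : ∀ i, A i i = 0

/-- The graph pseudo-metric: the infimum over doubly stochastic `S` of
`‖A·S − S·B‖ + Σ_{i,j} S_{i,j} ‖X_i − Y_j‖`. -/
noncomputable def graphDist {n d : ℕ} (G H : FeaturedGraph n d) : ℝ :=
  sInf {r | ∃ S ∈ doublyStochastic ℝ (Fin n),
    r = l2OpNorm (G.A * S - S * H.A) + ∑ i, ∑ j, S i j * ‖G.X i - H.X j‖}

/-!
Composing couplings: if `S` is near-optimal for `(G, H)` and `T` for `(H, K)`, then the doubly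
stochastic matrix `S * T` costs at most the sum for `(G, K)`. On the adjacency side
`A(ST) - (ST)C = (AS - SB)T + S(BT - TC)`, and doubly stochastic matrices have ℓ² operator norm
at most one (Birkhoff: they are averages of permutation matrices). On the feature side
`S * T` glues the two transport plans through the vertices of `H`, and the triangle inequality
in `ℝ^d` is applied pointwise.
-/

open Finset Matrix
open scoped Matrix.Norms.L2Operator

theorem norm_mul_mul_sub_mul_mul_le {R : Type*} [SeminormedRing R] {a b c s t : R}
    (hs : ‖s‖ ≤ 1) (ht : ‖t‖ ≤ 1) :
    ‖a * (s * t) - s * t * c‖ ≤ ‖a * s - s * b‖ + ‖b * t - t * c‖ := by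
  have split : a * (s * t) - s * t * c = (a * s - s * b) * t + s * (b * t - t * c) := by
    noncomm_ring
  calc ‖a * (s * t) - s * t * c‖ ≤ ‖a * s - s * b‖ * ‖t‖ + ‖s‖ * ‖b * t - t * c‖ := by
        rw [split]
        exact (norm_add_le _ _).trans (add_le_add (norm_mul_le _ _) (norm_mul_le _ _))
    _ ≤ ‖a * s - s * b‖ * 1 + 1 * ‖b * t - t * c‖ := by gcongr
    _ = ‖a * s - s * b‖ + ‖b * t - t * c‖ := by ring

theorem sum_mul_mul_dist_le_of_mem_doublyStochastic {ι α : Type*} [Fintype ι] [DecidableEq ι]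
    [PseudoMetricSpace α] {S T : Matrix ι ι ℝ} (hS : S ∈ doublyStochastic ℝ ι)
    (hT : T ∈ doublyStochastic ℝ ι) (x y z : ι → α) :
    ∑ i, ∑ k, (S * T) i k * dist (x i) (z k) ≤
      ∑ i, ∑ j, S i j * dist (x i) (y j) + ∑ j, ∑ k, T j k * dist (y j) (z k) := by
  have through_y : ∀ i j, ∑ k, S i j * T j k * dist (x i) (z k) ≤
      S i j * dist (x i) (y j) + S i j * ∑ k, T j k * dist (y j) (z k) := by
    intro i j
    calc ∑ k, S i j * T j k * dist (x i) (z k)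
        ≤ ∑ k, S i j * T j k * (dist (x i) (y j) + dist (y j) (z k)) := by
          gcongr with k
          · exact mul_nonneg (nonneg_of_mem_doublyStochastic hS)
              (nonneg_of_mem_doublyStochastic hT)
          · exact dist_triangle _ _ _
      _ = S i j * dist (x i) (y j) * ∑ k, T j k + S i j * ∑ k, T j k * dist (y j) (z k) := by
          simp only [mul_add, sum_add_distrib, mul_sum]
          congr 1 <;> exact sum_congr rfl fun k _ => by ring
      _ = S i j * dist (x i) (y j) + S i j * ∑ k, T j k * dist (y j) (z k) := by
          rw [sum_row_of_mem_doublyStochastic hT, mul_one]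
  calc ∑ i, ∑ k, (S * T) i k * dist (x i) (z k)
      = ∑ i, ∑ j, ∑ k, S i j * T j k * dist (x i) (z k) := by
        simp only [mul_apply, sum_mul]
        exact sum_congr rfl fun i _ => sum_comm
    _ ≤ ∑ i, ∑ j, (S i j * dist (x i) (y j) + S i j * ∑ k, T j k * dist (y j) (z k)) := by
        gcongr with i _ j
        exact through_y i j
    _ = ∑ i, ∑ j, S i j * dist (x i) (y j) + ∑ j, ∑ k, T j k * dist (y j) (z k) := by
        have col_sums : ∑ i, ∑ j, S i j * ∑ k, T j k * dist (y j) (z k) =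
            ∑ j, ∑ k, T j k * dist (y j) (z k) := by
          rw [sum_comm]
          simp only [← sum_mul, sum_col_of_mem_doublyStochastic hS, one_mul]
        simp only [sum_add_distrib, col_sums]

theorem l2OpNorm_eq_norm {n : ℕ} (M : Matrix (Fin n) (Fin n) ℝ) : l2OpNorm M = ‖M‖ := rfl

noncomputable def graphCost {n d : ℕ} (G H : FeaturedGraph n d)
    (S : Matrix (Fin n) (Fin n) ℝ) : ℝ :=
  l2OpNorm (G.A * S - S * H.A) + ∑ i, ∑ j, S i j * ‖G.X i - H.X j‖

section graphCost

variable {n d : ℕ} (G H K : FeaturedGraph n d) {S T : Matrix (Fin n) (Fin n) ℝ}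

theorem graphCost_nonneg (hS : S ∈ doublyStochastic ℝ (Fin n)) : 0 ≤ graphCost G H S :=
  add_nonneg (norm_nonneg _) <| sum_nonneg fun _ _ => sum_nonneg fun _ _ =>
    mul_nonneg (nonneg_of_mem_doublyStochastic hS) (norm_nonneg _)

theorem graphCost_mul_le (hS : S ∈ doublyStochastic ℝ (Fin n))
    (hT : T ∈ doublyStochastic ℝ (Fin n)) :
    graphCost G K (S * T) ≤ graphCost G H S + graphCost H K T := by
  have adjacency := norm_mul_mul_sub_mul_mul_le (a := G.A) (b := H.A) (c := K.A)
    (l2_opNorm_le_one_of_mem_doublyStochastic hS) (l2_opNorm_le_one_of_mem_doublyStochastic hT)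
  have features := sum_mul_mul_dist_le_of_mem_doublyStochastic hS hT G.X H.X K.X
  simp only [dist_eq_norm] at features
  simp only [graphCost, l2OpNorm_eq_norm]
  linarith

theorem graphDist_eq_sInf_image :
    graphDist G H = sInf (graphCost G H '' doublyStochastic ℝ (Fin n)) := by
  simp only [graphDist, graphCost, Set.image, eq_comm]
  rfl

theorem graphCost_image_nonempty : (graphCost G H '' doublyStochastic ℝ (Fin n)).Nonempty :=
  Set.image_nonempty.2 ⟨1, one_mem _⟩

theorem bddBelow_graphCost_image : BddBelow (graphCost G H '' doublyStochastic ℝ (Fin n)) :=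
  ⟨0, Set.forall_mem_image.2 fun _ hS => graphCost_nonneg G H hS⟩

end graphCost

/-- The graph pseudo-metric satisfies the triangle inequality. -/
theorem graphDist_triangle {n d : ℕ} (G H K : FeaturedGraph n d) :
    graphDist G K ≤ graphDist G H + graphDist H K := by
  simp only [graphDist_eq_sInf_image]
  rw [← csInf_add (graphCost_image_nonempty G H) (bddBelow_graphCost_image G H)
    (graphCost_image_nonempty H K) (bddBelow_graphCost_image H K)]
  refine le_csInf ((graphCost_image_nonempty G H).add (graphCost_image_nonempty H K)) ?_
  rintro _ ⟨_, ⟨S, hS, rfl⟩, _, ⟨T, hT, rfl⟩, rfl⟩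
  calc sInf (graphCost G K '' doublyStochastic ℝ (Fin n)) ≤ graphCost G K (S * T) :=
        csInf_le (bddBelow_graphCost_image G K) ⟨S * T, mul_mem hS hT, rfl⟩
    _ ≤ graphCost G H S + graphCost H K T := graphCost_mul_le G H K hS hT
end

section
/- Let (A,X) be a featured graph on n vertices with color refinement relations r_0, r_1, …. Then the partition of the vertex set into equivalence classes of r_n is a stable partition: any two vertices u, v with r_n u v satisfy X_u = X_v, and for every equivalence class P of r_n, |N_G(u) ∩ P| = |N_G(v) ∩ P|. -/
open Classical in
/-- The neighbor set of `u` in the simple graph with adjacency matrix `A`. -/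
noncomputable def nbrs {n : ℕ} (A : Matrix (Fin n) (Fin n) ℝ) (u : Fin n) : Finset (Fin n) :=
  Finset.univ.filter fun z => A u z = 1

open Classical in
/-- The color refinement (1-WL) sequence of relations, for a vertex type `V` with
neighbor sets `N` and features `X`: `r 0 u v ↔ X u = X v`, and `r (t+1) u v` iff
`r t u v` and for every `w`, `u` and `v` have equally many neighbors `z` with `r t z w`. -/
noncomputable def colorRefine {V F : Type*} (N : V → Finset V) (X : V → F) :
    ℕ → V → V → Prop
  | 0 => fun u v => X u = X v
  | t + 1 => fun u v => colorRefine N X t u v ∧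
      ∀ w, ((N u).filter fun z => colorRefine N X t z w).card =
           ((N v).filter fun z => colorRefine N X t z w).card

open Function

namespace Setoid

variable {α : Type*}

theorem map_of_le_surjective {r s : Setoid α} (h : r ≤ s) : Surjective (map_of_le h) :=
  Quotient.map_surjective h surjective_id

theorem eq_of_le_of_card_quotient_le [Finite α] {r s : Setoid α} (h : r ≤ s)
    (hc : Nat.card (Quotient r) ≤ Nat.card (Quotient s)) : r = s := by
  have hinj := ((map_of_le_surjective h).bijective_of_nat_card_le hc).injective
  exact le_antisymm h fun x y hxy => Quotient.exact (hinj (Quotient.sound hxy))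

theorem card_quotient_lt_of_lt [Finite α] {r s : Setoid α} (h : r < s) :
    Nat.card (Quotient s) < Nat.card (Quotient r) :=
  lt_of_not_ge fun hc => h.ne (eq_of_le_of_card_quotient_le h.le hc)

theorem succ_card_eq_of_antitone [Finite α] {r : ℕ → Setoid α} (hr : Antitone r)
    (hstable : ∀ t, r (t + 1) = r t → r (t + 2) = r (t + 1)) :
    r (Nat.card α + 1) = r (Nat.card α) := by
  have key : ∀ t, r (t + 1) = r t ∨ t + 1 ≤ Nat.card (Quotient (r (t + 1))) := by
    intro t
    induction t with
    | zero =>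
      refine (hr (Nat.le_succ 0)).eq_or_lt.imp id fun hlt => ?_
      exact Nat.one_le_of_lt (card_quotient_lt_of_lt hlt)
    | succ t ih =>
      refine (hr (Nat.le_succ (t + 1))).eq_or_lt.imp id fun hlt => ?_
      have hprev : r (t + 1) ≠ r t := fun h => hlt.ne (hstable t h)
      exact (ih.resolve_left hprev).trans_lt (card_quotient_lt_of_lt hlt)
  refine (key (Nat.card α)).resolve_right fun hc => ?_
  have := Nat.card_le_card_of_surjective _ (Quotient.mk_surjective (s := r (Nat.card α + 1)))
  omega

end Setoid

section ColorRefine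

variable {V F : Type*} (N : V → Finset V) (X : V → F)

theorem colorRefine_equivalence (t : ℕ) : Equivalence (colorRefine N X t) := by
  induction t with
  | zero => exact ⟨fun _ => rfl, Eq.symm, Eq.trans⟩
  | succ t ih =>
    exact ⟨fun u => ⟨ih.refl u, fun _ => rfl⟩, fun h => ⟨ih.symm h.1, fun w => (h.2 w).symm⟩,
      fun h h' => ⟨ih.trans h.1 h'.1, fun w => (h.2 w).trans (h'.2 w)⟩⟩

def colorRefineSetoid (t : ℕ) : Setoid V := ⟨colorRefine N X t, colorRefine_equivalence N X t⟩

theorem colorRefine_succ_le (t : ℕ) : colorRefine N X (t + 1) ≤ colorRefine N X t :=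
  fun _ _ h => h.1

theorem colorRefine_succ_eq_of_eq {s t : ℕ} (h : colorRefine N X s = colorRefine N X t) :
    colorRefine N X (s + 1) = colorRefine N X (t + 1) := by
  rw [colorRefine, colorRefine, h]

theorem features_eq_of_colorRefine {t : ℕ} {u v : V} (h : colorRefine N X t u v) : X u = X v := by
  induction t with
  | zero => exact h
  | succ t ih => exact ih h.1

theorem colorRefine_card_succ [Finite V] :
    colorRefine N X (Nat.card V + 1) = colorRefine N X (Nat.card V) :=
  Setoid.eq_iff_rel_eq.mp <| Setoid.succ_card_eq_of_antitone (r := colorRefineSetoid N X)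
    (antitone_nat_of_succ_le fun t => colorRefine_succ_le N X t)
    fun _ h => Setoid.eq_iff_rel_eq.mpr <| colorRefine_succ_eq_of_eq N X (Setoid.eq_iff_rel_eq.mp h)

end ColorRefine

open Classical in
/-- The equivalence classes of `r n` form a stable partition: related vertices have
equal features and, for each class (the class of any vertex `w`), equally many
neighbors within that class. -/
theorem colorRefine_n_stablePartition {n d : ℕ} (G : FeaturedGraph n d)
    (u v : Fin n) (huv : colorRefine (nbrs G.A) G.X n u v) :
    G.X u = G.X v ∧
      ∀ w : Fin n,
        (nbrs G.A u ∩ Finset.univ.filter fun z => colorRefine (nbrs G.A) G.X n z w).card =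
        (nbrs G.A v ∩ Finset.univ.filter fun z => colorRefine (nbrs G.A) G.X n z w).card := by
  have hstable := colorRefine_card_succ (nbrs G.A) G.X
  rw [Nat.card_fin] at hstable
  have huv' : colorRefine (nbrs G.A) G.X (n + 1) u v := hstable ▸ huv
  refine ⟨features_eq_of_colorRefine _ _ huv, fun w => ?_⟩
  simpa only [Finset.inter_filter, Finset.inter_univ] using huv'.2 w
end

section
/- Let (A,X) and (B,Y) be featured graphs on n vertices admitting a common stable partition: stable partitions P₁,…,P_k of (A,X) and Q₁,…,Q_k of (B,Y) with |P_t| = |Q_t| = n_t, all vertices in P_t ∪ Q_t sharing the same feature, and |N_G(u) ∩ P_l| = |N_H(v) ∩ Q_l| for all u ∈ P_t, v ∈ Q_t and all t, l. Then there exists a doubly stochastic matrix S with A·S = S·B and Σ_{i,j} S_{i,j}·‖X_i − Y_j‖ = 0; concretely, after relabeling vertices so that each P_t and Q_t occupies the same consecutive block of indices, S = (1/n₁)J_{n₁} ⊕ ⋯ ⊕ (1/n_k)J_{n_k} works, where J_m is the m×m all-ones matrix. Consequently d((A,X),(B,Y)) = 0. -/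
/-- A stable partition of a featured graph: a partition of the vertices into
nonempty parts such that vertices in the same part have the same feature and the
same number of neighbors in every part. -/
def IsStablePartition {n d k : ℕ} (G : FeaturedGraph n d) (P : Fin k → Finset (Fin n)) : Prop :=
  (∀ t, (P t).Nonempty) ∧ (∀ i : Fin n, ∃! t, i ∈ P t) ∧
    ∀ t, ∀ u ∈ P t, ∀ v ∈ P t, G.X u = G.X v ∧
      ∀ l, (nbrs G.A u ∩ P l).card = (nbrs G.A v ∩ P l).card

/-! Let `S` have entry `1/|P t|` at `(i, j)` whenever `i ∈ P t` and `j ∈ Q t`. Since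
`|P t| = |Q t|` it is doubly stochastic, and since matching parts carry one feature its transport
cost vanishes. For `u ∈ P t` and `j ∈ Q l`, `(A S) u j` is the number of neighbours of `u` in `P l`
divided by `|P l|`, and `(S B) u j` the number of neighbours of `j` in `Q t` divided by `|P t|`.
The degree condition replaces the first count by that of any `v ∈ Q t` in `Q l`, and double
counting the edges between `Q t` and `Q l` in `H` shows the two quotients agree. -/

open Finset

section Neighbours

variable {n : ℕ} {A : Matrix (Fin n) (Fin n) ℝ}

lemma card_nbrs_inter_eq_sum (h01 : ∀ i j, A i j = 0 ∨ A i j = 1) (u : Fin n)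
    (s : Finset (Fin n)) : ((nbrs A u ∩ s).card : ℝ) = ∑ z ∈ s, A u z := by
  classical
  rw [inter_comm, nbrs, inter_filter, inter_univ, card_filter, Nat.cast_sum]
  refine sum_congr rfl fun z _ => ?_
  rcases h01 u z with h | h <;> simp [h]

lemma sum_card_nbrs_inter_comm (h01 : ∀ i j, A i j = 0 ∨ A i j = 1) (hA : A.IsSymm)
    (s t : Finset (Fin n)) :
    ∑ u ∈ s, (nbrs A u ∩ t).card = ∑ w ∈ t, (nbrs A w ∩ s).card := by
  have : ∑ u ∈ s, ((nbrs A u ∩ t).card : ℝ) = ∑ w ∈ t, ((nbrs A w ∩ s).card : ℝ) := by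
    simp only [card_nbrs_inter_eq_sum h01]
    exact sum_comm.trans (sum_congr rfl fun z _ => sum_congr rfl fun x _ => hA.apply z x)
  exact_mod_cast this

end Neighbours

lemma IsStablePartition.card_mul_card_nbrs_inter {n d k : ℕ} {G : FeaturedGraph n d}
    {P : Fin k → Finset (Fin n)} (hP : IsStablePartition G P) {t l : Fin k} {u v : Fin n}
    (hu : u ∈ P t) (hv : v ∈ P l) :
    (P t).card * (nbrs G.A u ∩ P l).card = (P l).card * (nbrs G.A v ∩ P t).card := by
  have hsum : ∀ {a b : Fin k} {x : Fin n}, x ∈ P a →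
      ∑ w ∈ P a, (nbrs G.A w ∩ P b).card = (P a).card * (nbrs G.A x ∩ P b).card :=
    fun hx => by
      rw [sum_congr rfl fun w hw => (hP.2.2 _ w hw _ hx).2 _, sum_const, smul_eq_mul]
  rw [← hsum hu, ← hsum hv, sum_card_nbrs_inter_comm G.zeroOne G.isSymm]

section BlockAverage

variable {n k : ℕ} (P Q : Fin k → Finset (Fin n))

/-- The paper's `(1/n₁)J_{n₁} ⊕ ⋯ ⊕ (1/n_k)J_{n_k}`, without relabelling the vertices so that
the parts become consecutive blocks. -/
noncomputable def blockAverage : Matrix (Fin n) (Fin n) ℝ :=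
  Matrix.of fun i j => ∑ t, if i ∈ P t ∧ j ∈ Q t then ((P t).card : ℝ)⁻¹ else 0

variable {P Q}

lemma blockAverage_apply_of_mem_left (hP : ∀ i, ∃! t, i ∈ P t) {i : Fin n} {t : Fin k}
    (hi : i ∈ P t) (j : Fin n) :
    blockAverage P Q i j = if j ∈ Q t then ((P t).card : ℝ)⁻¹ else 0 := by
  rw [blockAverage, Matrix.of_apply, sum_eq_single t]
  · simp [hi]
  · intro t' _ ht'
    rw [if_neg fun h => ht' ((hP i).unique h.1 hi)]
  · simp

lemma blockAverage_apply_of_mem_right (hQ : ∀ j, ∃! t, j ∈ Q t) {j : Fin n} {t : Fin k}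
    (hj : j ∈ Q t) (i : Fin n) :
    blockAverage P Q i j = if i ∈ P t then ((P t).card : ℝ)⁻¹ else 0 := by
  rw [blockAverage, Matrix.of_apply, sum_eq_single t]
  · simp [hj]
  · intro t' _ ht'
    rw [if_neg fun h => ht' ((hQ j).unique h.2 hj)]
  · simp

lemma blockAverage_nonneg (i j : Fin n) : 0 ≤ blockAverage P Q i j := by
  rw [blockAverage, Matrix.of_apply]
  exact sum_nonneg fun t _ => by split_ifs <;> positivity

lemma blockAverage_mem_doublyStochastic (hP : ∀ i, ∃! t, i ∈ P t) (hQ : ∀ j, ∃! t, j ∈ Q t)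
    (hcard : ∀ t, (P t).card = (Q t).card) : blockAverage P Q ∈ doublyStochastic ℝ (Fin n) := by
  rw [mem_doublyStochastic_iff_sum]
  refine ⟨blockAverage_nonneg, fun i => ?_, fun j => ?_⟩
  · obtain ⟨t, hi, -⟩ := hP i
    have : ((P t).card : ℝ) ≠ 0 := Nat.cast_ne_zero.2 (card_ne_zero_of_mem hi)
    simp [blockAverage_apply_of_mem_left hP hi, ← hcard, this]
  · obtain ⟨t, hj, -⟩ := hQ j
    have : ((P t).card : ℝ) ≠ 0 := Nat.cast_ne_zero.2 (hcard t ▸ card_ne_zero_of_mem hj)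
    simp [blockAverage_apply_of_mem_right hQ hj, this]

lemma mul_blockAverage_apply (hQ : ∀ j, ∃! t, j ∈ Q t) (A : Matrix (Fin n) (Fin n) ℝ)
    {j : Fin n} {t : Fin k} (hj : j ∈ Q t) (u : Fin n) :
    (A * blockAverage P Q) u j = (∑ z ∈ P t, A u z) / (P t).card := by
  simp [Matrix.mul_apply, blockAverage_apply_of_mem_right hQ hj, div_eq_mul_inv, sum_mul]

lemma blockAverage_mul_apply (hP : ∀ i, ∃! t, i ∈ P t) (B : Matrix (Fin n) (Fin n) ℝ)
    {u : Fin n} {t : Fin k} (hu : u ∈ P t) (j : Fin n) :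
    (blockAverage P Q * B) u j = (∑ z ∈ Q t, B z j) / (P t).card := by
  simp [Matrix.mul_apply, blockAverage_apply_of_mem_left hP hu, div_eq_inv_mul, mul_sum]

lemma sum_blockAverage_mul_norm_sub_eq_zero {E : Type*} [SeminormedAddCommGroup E]
    {X Y : Fin n → E} (hXY : ∀ t, ∀ u ∈ P t, ∀ v ∈ Q t, X u = Y v) :
    ∑ i, ∑ j, blockAverage P Q i j * ‖X i - Y j‖ = 0 := by
  refine sum_eq_zero fun i _ => sum_eq_zero fun j _ => ?_
  rw [blockAverage, Matrix.of_apply, sum_mul]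
  refine sum_eq_zero fun t _ => ?_
  split_ifs with h
  · simp [hXY t i h.1 j h.2]
  · simp

end BlockAverage

theorem mul_blockAverage_eq_blockAverage_mul {n d k : ℕ} {G H : FeaturedGraph n d}
    {P Q : Fin k → Finset (Fin n)} (hP : ∀ i, ∃! t, i ∈ P t) (hQ : IsStablePartition H Q)
    (hcard : ∀ t, (P t).card = (Q t).card)
    (hdeg : ∀ t l, ∀ u ∈ P t, ∀ v ∈ Q t,
      (nbrs G.A u ∩ P l).card = (nbrs H.A v ∩ Q l).card) :
    G.A * blockAverage P Q = blockAverage P Q * H.A := by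
  ext u j
  obtain ⟨t, hu, -⟩ := hP u
  obtain ⟨l, hj, -⟩ := hQ.2.1 j
  obtain ⟨v, hv⟩ : (Q t).Nonempty := card_pos.1 (hcard t ▸ card_pos.2 ⟨u, hu⟩)
  have hsymm : ∑ z ∈ Q t, H.A z j = ∑ z ∈ Q t, H.A j z :=
    sum_congr rfl fun z _ => H.isSymm.apply j z
  have hcount : ((Q t).card : ℝ) * (nbrs H.A v ∩ Q l).card
      = (Q l).card * (nbrs H.A j ∩ Q t).card := by
    exact_mod_cast hQ.card_mul_card_nbrs_inter hv hj
  rw [mul_blockAverage_apply hQ.2.1 _ hj, blockAverage_mul_apply hP _ hu, hsymm,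
    ← card_nbrs_inter_eq_sum G.zeroOne, ← card_nbrs_inter_eq_sum H.zeroOne,
    hdeg t l u hu v hv, hcard, hcard, div_eq_div_iff (by simpa using card_ne_zero_of_mem hj)
      (by simpa using card_ne_zero_of_mem hv)]
  linarith

lemma graphDist_eq_zero_of_mem_doublyStochastic {n d : ℕ} {G H : FeaturedGraph n d}
    {S : Matrix (Fin n) (Fin n) ℝ} (hS : S ∈ doublyStochastic ℝ (Fin n))
    (hcomm : G.A * S = S * H.A) (hcost : ∑ i, ∑ j, S i j * ‖G.X i - H.X j‖ = 0) :
    graphDist G H = 0 := by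
  have hlb : ∀ T ∈ doublyStochastic ℝ (Fin n),
      0 ≤ l2OpNorm (G.A * T - T * H.A) + ∑ i, ∑ j, T i j * ‖G.X i - H.X j‖ :=
    fun T hT => add_nonneg (norm_nonneg _) (sum_nonneg fun i _ => sum_nonneg fun j _ =>
      mul_nonneg (nonneg_of_mem_doublyStochastic hT) (norm_nonneg _))
  refine le_antisymm (csInf_le ⟨0, ?_⟩ ⟨S, hS, ?_⟩) (le_csInf ⟨_, S, hS, rfl⟩ ?_)
  · rintro _ ⟨T, hT, rfl⟩
    exact hlb T hT
  · simp [l2OpNorm, hcomm, hcost]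
  · rintro _ ⟨T, hT, rfl⟩
    exact hlb T hT

/-- If two featured graphs admit a common stable partition, then there is a doubly
stochastic matrix `S` with `A·S = S·B` whose feature transport cost vanishes;
consequently the graph pseudo-metric between the two graphs is `0`. -/
theorem commonStablePartition_graphDist_eq_zero {n d k : ℕ}
    (G H : FeaturedGraph n d) (P Q : Fin k → Finset (Fin n))
    (hP : IsStablePartition G P) (hQ : IsStablePartition H Q)
    (hcard : ∀ t, (P t).card = (Q t).card)
    (hfeat : ∀ t, ∀ u ∈ P t, ∀ v ∈ Q t, G.X u = H.X v)
    (hdeg : ∀ t l, ∀ u ∈ P t, ∀ v ∈ Q t,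
      (nbrs G.A u ∩ P l).card = (nbrs H.A v ∩ Q l).card) :
    (∃ S ∈ doublyStochastic ℝ (Fin n),
        G.A * S = S * H.A ∧ ∑ i, ∑ j, S i j * ‖G.X i - H.X j‖ = 0) ∧
      graphDist G H = 0 := by
  have hS := blockAverage_mem_doublyStochastic hP.2.1 hQ.2.1 hcard
  have hcomm := mul_blockAverage_eq_blockAverage_mul hP.2.1 hQ hcard hdeg
  have hcost := sum_blockAverage_mul_norm_sub_eq_zero hfeat
  exact ⟨⟨_, hS, hcomm, hcost⟩, graphDist_eq_zero_of_mem_doublyStochastic hS hcomm hcost⟩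
end

section
/- Let (A,X) and (B,Y) be featured graphs on n vertices, and let S be a doubly stochastic matrix which is block-diagonal with blocks S₁,…,S_t occupying consecutive index intervals I₁,…,I_t, where each block is indecomposable (the bipartite graph on I_m × I_m with edges the pairs (i,j) with S_{i,j} > 0 is connected). Suppose A·S = S·B and Σ_{i,j} S_{i,j}·‖X_i − Y_j‖ = 0. Then the partition of indices into the intervals I₁,…,I_t is a common stable partition of (A,X) and (B,Y): it is a stable partition of each graph, vertices of either graph with index in the same I_m all have the same feature vector, and for all m, l, every i ∈ I_m and j ∈ I_m satisfy |N_G(i) ∩ I_l| = |N_H(j) ∩ I_l|, where G, H are the underlying simple graphs of A, B. -/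
/-- The bipartite support graph of a matrix `S` on `Fin n ⊕ Fin n`: `inl i` is
adjacent to `inr j` exactly when `S i j > 0`. -/
def supportGraph {n : ℕ} (S : Matrix (Fin n) (Fin n) ℝ) : SimpleGraph (Fin n ⊕ Fin n) :=
  SimpleGraph.fromRel fun a b => ∃ i j, a = Sum.inl i ∧ b = Sum.inr j ∧ 0 < S i j

open Classical in

private lemma const_of_reachable {V α : Type*} {G : SimpleGraph V} (f : V → α)
    (hf : ∀ a b, G.Adj a b → f a = f b) {u v : V} (h : G.Reachable u v) : f u = f v := by
  obtain ⟨w⟩ := h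
  induction w with
  | nil => rfl
  | cons h' p ih => exact (hf _ _ h').trans ih

private lemma key_eq {n : ℕ} {S : Matrix (Fin n) (Fin n) ℝ} (hpos : ∀ i j, 0 ≤ S i j)
    (hrow : ∀ i, ∑ j, S i j = 1) (hcol : ∀ j, ∑ i, S i j = 1)
    (g h : Fin n → ℝ) (R1 : ∀ i, g i = ∑ j, S i j * h j)
    (R2 : ∀ j, h j = ∑ i, S i j * g i) :
    ∀ i j, S i j ≠ 0 → g i = h j := by
  have cross1 : ∑ i, ∑ j, S i j * (g i * h j) = ∑ i, g i ^ 2 := by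
    refine Finset.sum_congr rfl fun i _ => ?_
    have : ∑ j, S i j * (g i * h j) = g i * ∑ j, S i j * h j := by
      rw [Finset.mul_sum]; exact Finset.sum_congr rfl fun j _ => by ring
    rw [this, ← R1 i]; ring
  have cross2 : ∑ i, ∑ j, S i j * (g i * h j) = ∑ j, h j ^ 2 := by
    rw [Finset.sum_comm]
    refine Finset.sum_congr rfl fun j _ => ?_
    have : ∑ i, S i j * (g i * h j) = h j * ∑ i, S i j * g i := by
      rw [Finset.mul_sum]; exact Finset.sum_congr rfl fun i _ => by ring
    rw [this, ← R2 j]; ring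
  have sq1 : ∑ i, ∑ j, S i j * g i ^ 2 = ∑ i, g i ^ 2 := by
    refine Finset.sum_congr rfl fun i _ => ?_
    rw [← Finset.sum_mul, hrow i, one_mul]
  have sq2 : ∑ i, ∑ j, S i j * h j ^ 2 = ∑ j, h j ^ 2 := by
    rw [Finset.sum_comm]
    refine Finset.sum_congr rfl fun j _ => ?_
    rw [← Finset.sum_mul, hcol j, one_mul]
  have hQ : ∑ i, ∑ j, S i j * (g i - h j) ^ 2 = 0 := by
    have expand : ∑ i, ∑ j, S i j * (g i - h j) ^ 2
        = (∑ i, ∑ j, S i j * g i ^ 2) - 2 * (∑ i, ∑ j, S i j * (g i * h j))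
          + ∑ i, ∑ j, S i j * h j ^ 2 := by
      rw [Finset.mul_sum, ← Finset.sum_sub_distrib, ← Finset.sum_add_distrib]
      refine Finset.sum_congr rfl fun i _ => ?_
      rw [Finset.mul_sum, ← Finset.sum_sub_distrib, ← Finset.sum_add_distrib]
      exact Finset.sum_congr rfl fun j _ => by ring
    have e := cross1.symm.trans cross2
    rw [expand, sq1, sq2, cross1]; linarith
  intro i j hij
  have h1 := (Finset.sum_eq_zero_iff_of_nonneg (fun i _ =>
    Finset.sum_nonneg fun j _ => mul_nonneg (hpos i j) (sq_nonneg _))).mp hQ i (Finset.mem_univ i)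
  have h2 := (Finset.sum_eq_zero_iff_of_nonneg (fun j _ =>
    mul_nonneg (hpos i j) (sq_nonneg _))).mp h1 j (Finset.mem_univ j)
  have : (g i - h j) ^ 2 = 0 := by
    rcases mul_eq_zero.mp h2 with h | h
    · exact absurd h hij
    · exact h
  have := pow_eq_zero_iff (n := 2) (by norm_num) |>.mp this
  linarith [this]

open Classical in
/-- If `S` is doubly stochastic and block diagonal with indecomposable blocks
occupying consecutive index intervals `I₁,…,I_t`, `A·S = S·B`, and the feature
transport cost vanishes, then the intervals form a common stable partition of the
two featured graphs. -/
theorem blockDiagonal_common_stablePartition {n d t : ℕ}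
    (G H : FeaturedGraph n d) (S : Matrix (Fin n) (Fin n) ℝ)
    (hS : S ∈ doublyStochastic ℝ (Fin n))
    -- the cut points of the consecutive intervals
    (b : Fin (t + 1) → ℕ) (hb0 : b 0 = 0) (hbn : b (Fin.last t) = n)
    (hbmono : StrictMono b)
    -- `I m` is the `m`-th consecutive interval of indices
    (I : Fin t → Finset (Fin n))
    (hI : ∀ m (i : Fin n), i ∈ I m ↔ b m.castSucc ≤ (i : ℕ) ∧ (i : ℕ) < b m.succ)
    -- `S` is block diagonal with blocks on the intervals
    (hblock : ∀ i j, S i j ≠ 0 → ∃ m, i ∈ I m ∧ j ∈ I m)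
    -- each block is indecomposable: its bipartite support graph is connected
    (hindec : ∀ m, ∀ i ∈ I m, ∀ j ∈ I m,
      (supportGraph S).Reachable (Sum.inl i) (Sum.inr j))
    (hcomm : G.A * S = S * H.A)
    (hsum : ∑ i, ∑ j, S i j * ‖G.X i - H.X j‖ = 0) :
    IsStablePartition G I ∧ IsStablePartition H I ∧
      (∀ m, ∀ i ∈ I m, ∀ j ∈ I m, G.X i = H.X j) ∧
      ∀ m l, ∀ i ∈ I m, ∀ j ∈ I m,
        (nbrs G.A i ∩ I l).card = (nbrs H.A j ∩ I l).card := by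
  classical
  obtain ⟨hpos, hrow, hcol⟩ := mem_doublyStochastic_iff_sum.mp hS
  -- uniqueness of block membership
  have huniq : ∀ (i : Fin n) (m m' : Fin t), i ∈ I m → i ∈ I m' → m = m' := by
    intro i m m' hm hm'
    obtain ⟨h1, h2⟩ := (hI m i).mp hm
    obtain ⟨h3, h4⟩ := (hI m' i).mp hm'
    by_contra hne
    rcases lt_trichotomy (m : ℕ) (m' : ℕ) with h | h | h
    · have : b m.succ ≤ b m'.castSucc := hbmono.monotone (by
        simp only [Fin.le_def, Fin.val_succ, Fin.coe_castSucc]; omega)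
      omega
    · exact hne (Fin.ext h)
    · have : b m'.succ ≤ b m.castSucc := hbmono.monotone (by
        simp only [Fin.le_def, Fin.val_succ, Fin.coe_castSucc]; omega)
      omega
  -- existence and uniqueness of block membership
  have hmemex : ∀ i : Fin n, ∃ m, i ∈ I m := by
    intro i
    have hn0 : (i : ℕ) < n := i.isLt
    set s : Finset (Fin (t + 1)) := Finset.univ.filter (fun k => b k ≤ (i : ℕ)) with hs
    have hsne : s.Nonempty := ⟨0, by simp [hs, hb0]⟩
    set m' := s.max' hsne with hm'
    have hm'le : b m' ≤ (i : ℕ) := (Finset.mem_filter.mp (s.max'_mem hsne)).2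
    have hm'lt : (m' : ℕ) < t := by
      by_contra h
      have : m' = Fin.last t := Fin.ext (le_antisymm (Nat.lt_succ_iff.mp m'.isLt) (not_lt.mp h))
      rw [this, hbn] at hm'le; omega
    have hcs : (⟨(m' : ℕ), hm'lt⟩ : Fin t).castSucc = m' := Fin.ext rfl
    refine ⟨⟨(m' : ℕ), hm'lt⟩, (hI _ i).mpr ⟨by rw [hcs]; exact hm'le, ?_⟩⟩
    by_contra h
    push_neg at h
    have hmem' : (⟨(m' : ℕ), hm'lt⟩ : Fin t).succ ∈ s :=
      Finset.mem_filter.mpr ⟨Finset.mem_univ _, h⟩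
    have hle := s.le_max' _ hmem'
    rw [← hm'] at hle
    have : (m' : ℕ) + 1 ≤ (m' : ℕ) := by simpa [Fin.le_def] using hle
    omega
  have hmem : ∀ i : Fin n, ∃! m, i ∈ I m := by
    intro i
    obtain ⟨m, hm⟩ := hmemex i
    exact ⟨m, hm, fun y hy => huniq i y m hy hm⟩
  -- nonemptiness of blocks
  have hneI : ∀ m, (I m).Nonempty := by
    intro m
    have h1 : b m.castSucc < b m.succ := hbmono (Fin.castSucc_lt_succ (i := m))
    have h2 : b m.succ ≤ n := hbn ▸ hbmono.monotone (Fin.le_last _)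
    exact ⟨⟨b m.castSucc, lt_of_lt_of_le h1 h2⟩, (hI m _).mpr ⟨le_refl _, h1⟩⟩
  -- block row/column sums
  have hrowI : ∀ (j : Fin n) (l : Fin t), ∑ k ∈ I l, S j k = if j ∈ I l then 1 else 0 := by
    intro j l
    by_cases hjl : j ∈ I l
    · rw [if_pos hjl, ← hrow j]
      refine Finset.sum_subset (Finset.subset_univ _) fun k _ hk => ?_
      by_contra h0
      obtain ⟨m, hjm, hkm⟩ := hblock j k h0
      exact hk (huniq j m l hjm hjl ▸ hkm)
    · rw [if_neg hjl]
      refine Finset.sum_eq_zero fun k hk => ?_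
      by_contra h0
      obtain ⟨m, hjm, hkm⟩ := hblock j k h0
      exact hjl (huniq k m l hkm hk ▸ hjm)
  have hcolI : ∀ (j : Fin n) (l : Fin t), ∑ k ∈ I l, S k j = if j ∈ I l then 1 else 0 := by
    intro j l
    by_cases hjl : j ∈ I l
    · rw [if_pos hjl, ← hcol j]
      refine Finset.sum_subset (Finset.subset_univ _) fun k _ hk => ?_
      by_contra h0
      obtain ⟨m, hkm, hjm⟩ := hblock k j h0
      exact hk (huniq j m l hjm hjl ▸ hkm)
    · rw [if_neg hjl]
      refine Finset.sum_eq_zero fun k hk => ?_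
      by_contra h0
      obtain ⟨m, hkm, hjm⟩ := hblock k j h0
      exact hjl (huniq k m l hkm hk ▸ hjm)
  -- sums of 0/1 rows count neighbors
  have cardSum : ∀ (A : Matrix (Fin n) (Fin n) ℝ), (∀ i j, A i j = 0 ∨ A i j = 1) →
      ∀ (i : Fin n) (s : Finset (Fin n)),
        ∑ j ∈ s, A i j = ((nbrs A i ∩ s).card : ℝ) := by
    intro A hA i s
    have h1 : ∀ j ∈ s, A i j = if A i j = 1 then (1 : ℝ) else 0 := by
      intro j _
      rcases hA i j with h | h <;> simp [h]
    rw [Finset.sum_congr rfl h1, Finset.sum_boole]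
    congr 1
    congr 1
    ext j
    simp only [nbrs, Finset.mem_inter, Finset.mem_filter, Finset.mem_univ, true_and]
    tauto
  -- the edge-preservation principle on the support graph
  have hAdjGen : ∀ {α : Type} (f : Fin n ⊕ Fin n → α),
      (∀ i j, S i j ≠ 0 → f (Sum.inl i) = f (Sum.inr j)) →
      ∀ a b', (supportGraph S).Adj a b' → f a = f b' := by
    intro α f hf a b' hab
    rw [supportGraph, SimpleGraph.fromRel_adj] at hab
    obtain ⟨-, h | h⟩ := hab
    · obtain ⟨i, j, rfl, rfl, hp⟩ := h
      exact hf i j (ne_of_gt hp)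
    · obtain ⟨i, j, rfl, rfl, hp⟩ := h
      exact (hf i j (ne_of_gt hp)).symm
  -- features transported along positive entries
  have hfeat0 : ∀ i j, S i j ≠ 0 → G.X i = H.X j := by
    intro i j hij
    have h1 := (Finset.sum_eq_zero_iff_of_nonneg (fun i _ =>
      Finset.sum_nonneg fun j _ => mul_nonneg (hpos i j) (norm_nonneg _))).mp hsum i
      (Finset.mem_univ i)
    have h2 := (Finset.sum_eq_zero_iff_of_nonneg (fun j _ =>
      mul_nonneg (hpos i j) (norm_nonneg _))).mp h1 j (Finset.mem_univ j)
    rcases mul_eq_zero.mp h2 with h | h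
    · exact absurd h hij
    · rwa [norm_eq_zero, sub_eq_zero] at h
  -- neighbor counts transported along positive entries
  have hcnt0 : ∀ (l : Fin t) i j, S i j ≠ 0 →
      ((nbrs G.A i ∩ I l).card : ℝ) = ((nbrs H.A j ∩ I l).card : ℝ) := by
    intro l
    have R1 : ∀ i, ((nbrs G.A i ∩ I l).card : ℝ)
        = ∑ j, S i j * ((nbrs H.A j ∩ I l).card : ℝ) := by
      intro i
      have lhs : ∑ k ∈ I l, (G.A * S) i k = ((nbrs G.A i ∩ I l).card : ℝ) := by
        calc ∑ k ∈ I l, (G.A * S) i k = ∑ k ∈ I l, ∑ j, G.A i j * S j k := by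
              simp [Matrix.mul_apply]
          _ = ∑ j, ∑ k ∈ I l, G.A i j * S j k := Finset.sum_comm
          _ = ∑ j, G.A i j * (if j ∈ I l then 1 else 0) := by
              refine Finset.sum_congr rfl fun j _ => ?_
              rw [← Finset.mul_sum, hrowI j l]
          _ = ∑ j ∈ I l, G.A i j := by
              simp [mul_ite, Finset.sum_ite_mem]
          _ = _ := cardSum G.A G.zeroOne i (I l)
      have rhs : ∑ k ∈ I l, (S * H.A) i k
          = ∑ j, S i j * ((nbrs H.A j ∩ I l).card : ℝ) := by
        calc ∑ k ∈ I l, (S * H.A) i k = ∑ k ∈ I l, ∑ j, S i j * H.A j k := by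
              simp [Matrix.mul_apply]
          _ = ∑ j, ∑ k ∈ I l, S i j * H.A j k := Finset.sum_comm
          _ = ∑ j, S i j * ∑ k ∈ I l, H.A j k := by
              simp [Finset.mul_sum]
          _ = _ := by
              refine Finset.sum_congr rfl fun j _ => ?_
              rw [cardSum H.A H.zeroOne j (I l)]
      rw [← lhs, hcomm, rhs]
    have R2 : ∀ j, ((nbrs H.A j ∩ I l).card : ℝ)
        = ∑ i, S i j * ((nbrs G.A i ∩ I l).card : ℝ) := by
      intro j
      have lhs : ∑ k ∈ I l, (G.A * S) k j
          = ∑ a, S a j * ((nbrs G.A a ∩ I l).card : ℝ) := by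
        calc ∑ k ∈ I l, (G.A * S) k j = ∑ k ∈ I l, ∑ a, G.A k a * S a j := by
              simp [Matrix.mul_apply]
          _ = ∑ a, ∑ k ∈ I l, G.A k a * S a j := Finset.sum_comm
          _ = ∑ a, (∑ k ∈ I l, G.A a k) * S a j := by
              refine Finset.sum_congr rfl fun a _ => ?_
              rw [Finset.sum_mul]
              exact Finset.sum_congr rfl fun k _ => by rw [G.isSymm.apply a k]
          _ = _ := by
              refine Finset.sum_congr rfl fun a _ => ?_
              rw [cardSum G.A G.zeroOne a (I l), mul_comm]
      have rhs : ∑ k ∈ I l, (S * H.A) k j = ((nbrs H.A j ∩ I l).card : ℝ) := by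
        calc ∑ k ∈ I l, (S * H.A) k j = ∑ k ∈ I l, ∑ a, S k a * H.A a j := by
              simp [Matrix.mul_apply]
          _ = ∑ a, ∑ k ∈ I l, S k a * H.A a j := Finset.sum_comm
          _ = ∑ a, (if a ∈ I l then 1 else 0) * H.A a j := by
              refine Finset.sum_congr rfl fun a _ => ?_
              rw [← Finset.sum_mul, hcolI]
          _ = ∑ a ∈ I l, H.A a j := by
              simp [ite_mul, Finset.sum_ite_mem]
          _ = ∑ a ∈ I l, H.A j a := by
              exact Finset.sum_congr rfl fun a _ => H.isSymm.apply j a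
          _ = _ := cardSum H.A H.zeroOne j (I l)
      rw [← rhs, ← hcomm, lhs]
    exact key_eq hpos hrow hcol _ _ R1 R2
  -- propagate along connected blocks
  have C1 : ∀ m, ∀ i ∈ I m, ∀ j ∈ I m, G.X i = H.X j := by
    intro m i hi j hj
    exact const_of_reachable (Sum.elim G.X H.X)
      (hAdjGen (Sum.elim G.X H.X) (fun i j h => hfeat0 i j h)) (hindec m i hi j hj)
  have C2 : ∀ m l, ∀ i ∈ I m, ∀ j ∈ I m,
      (nbrs G.A i ∩ I l).card = (nbrs H.A j ∩ I l).card := by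
    intro m l i hi j hj
    have h := const_of_reachable
      (Sum.elim (fun i => ((nbrs G.A i ∩ I l).card : ℝ))
        (fun j => ((nbrs H.A j ∩ I l).card : ℝ)))
      (hAdjGen _ (fun i j h => hcnt0 l i j h)) (hindec m i hi j hj)
    simp only [Sum.elim_inl, Sum.elim_inr] at h
    exact_mod_cast h
  refine ⟨⟨hneI, hmem, fun m u hu v hv => ⟨?_, fun l => ?_⟩⟩,
    ⟨hneI, hmem, fun m u hu v hv => ⟨?_, fun l => ?_⟩⟩, C1, C2⟩
  · exact (C1 m u hu v hv).trans (C1 m v hv v hv).symm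
  · have h1 := C2 m l u hu v hv
    have h2 := C2 m l v hv v hv
    omega
  · exact (C1 m u hu u hu).symm.trans (C1 m u hu v hv)
  · have h1 := C2 m l u hu u hu
    have h2 := C2 m l u hu v hv
    omega
end
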